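/- Let M be an Artinian monomial ideal in C[z_1,...,z_n] with staircase S and let σ be a permutation of {1,...,n}. Then ∑_α Vol(S_{σ,α}) = dim_C C[z_1,...,z_n]/M, where the sum is over the outer corners α of S. -/

import Mathlib

open MvPolynomial MeasureTheory

def lcmOf {n r : ℕ} (a : Fin r → Fin n → ℕ) (I : Finset (Fin r)) : Fin n → ℕ :=
  fun j => I.sup fun i => a i j

def Scarf {n r : ℕ} (a : Fin r → Fin n → ℕ) : Set (Finset (Fin r)) :=
  {I | ∀ J : Finset (Fin r), lcmOf a J = lcmOf a I → J = I}

def StrictlyDivides {n : ℕ} (b c : Fin n → ℕ) : Prop :=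
  ∀ ℓ, b ℓ ≤ c ℓ ∧ (0 < c ℓ → b ℓ < c ℓ)

def Generic {n : ℕ} {ι : Type*} (a : ι → Fin n → ℕ) : Prop :=
  ∀ i j, i ≠ j → (∃ ℓ, 0 < a i ℓ ∧ a i ℓ = a j ℓ) →
    ∃ k, StrictlyDivides (a k) (a i ⊔ a j)

def ArtinianGens {n : ℕ} {ι : Type*} (a : ι → Fin n → ℕ) : Prop :=
  ∀ ℓ : Fin n, ∃ i, ∀ m, m ≠ ℓ → a i m = 0

def MinimalGens {n : ℕ} {ι : Type*} (a : ι → Fin n → ℕ) : Prop :=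
  ∀ i j, a i ≤ a j → i = j

def genStaircase {n r : ℕ} (a : Fin r → Fin n → ℕ) : Set (Fin n → ℝ) :=
  {x | (∀ j, 0 < x j) ∧ ∀ i, ∃ j, x j ≤ (a i j : ℝ)}

def outerCorners {n : ℕ} (S : Set (Fin n → ℝ)) : Set (Fin n → ℝ) :=
  {α | α ∈ S ∧ ∀ x ∈ S, α ≤ x → x = α}

def lexGT {n : ℕ} (σ : Equiv.Perm (Fin n)) (α β : Fin n → ℝ) : Prop :=
  ∃ k, (∀ ℓ < k, α (σ ℓ) = β (σ ℓ)) ∧ β (σ k) < α (σ k)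

def piece {n : ℕ} (S : Set (Fin n → ℝ)) (σ : Equiv.Perm (Fin n)) (α : Fin n → ℝ) :
    Set (Fin n → ℝ) :=
  {x | x ∈ S ∧ x ≤ α ∧ ∀ β ∈ outerCorners S, lexGT σ β α → ¬ x ≤ β}

noncomputable def monIdeal {n : ℕ} (B : Set (Fin n → ℕ)) : Ideal (MvPolynomial (Fin n) ℂ) :=
  Ideal.span ((fun b => monomial (Finsupp.equivFunOnFinite.symm b) (1:ℂ)) '' B)

def IsMonomialIdeal {n : ℕ} (M : Ideal (MvPolynomial (Fin n) ℂ)) : Prop :=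
  ∃ B, M = monIdeal B

def staircaseI {n : ℕ} (M : Ideal (MvPolynomial (Fin n) ℂ)) : Set (Fin n → ℝ) :=
  {x | (∀ i, 0 < x i) ∧
    monomial (Finsupp.equivFunOnFinite.symm fun i => ⌈x i⌉₊ - 1) (1:ℂ) ∉ M}

/-
The monomials not in a monomial ideal `M` form a basis of `ℂ[z]/M`, so its dimension is the
number of standard exponents `b`. The staircase is the disjoint union of the unit cubes
`b + (0,1]ⁿ` over these `b`, so its volume is the same number. Finally the pieces `S_{σ,α}`
partition the staircase: a point lies in the piece of the `σ`-lexicographically largest outer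
corner above it, and every point of the staircase lies below some corner since the upper vertices
of the cubes form a finite cofinal subset.
-/

section Corners

variable {n : ℕ} {S P : Set (Fin n → ℝ)}

lemma outerCorners_subset_of_cofinal (hPS : P ⊆ S) (hcof : ∀ x ∈ S, ∃ p ∈ P, x ≤ p) :
    outerCorners S ⊆ P := by
  rintro α ⟨hαS, hmax⟩
  obtain ⟨p, hp, hαp⟩ := hcof α hαS
  rwa [← hmax p (hPS hp) hαp]

lemma exists_mem_outerCorners_ge_of_cofinal (hP : P.Finite) (hPS : P ⊆ S)
    (hcof : ∀ x ∈ S, ∃ p ∈ P, x ≤ p) {x : Fin n → ℝ} (hx : x ∈ S) :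
    ∃ α ∈ outerCorners S, x ≤ α := by
  obtain ⟨p, hp, hxp⟩ := hcof x hx
  obtain ⟨α, hpα, hα⟩ := hP.exists_le_maximal hp
  refine ⟨α, ⟨hPS hα.1, fun y hy hαy => ?_⟩, hxp.trans hpα⟩
  obtain ⟨q, hq, hyq⟩ := hcof y hy
  exact le_antisymm (hyq.trans (hα.2 hq (hαy.trans hyq))) hαy

end Corners

section Pieces

variable {n : ℕ}

def lexKey (σ : Equiv.Perm (Fin n)) (α : Fin n → ℝ) : Lex (Fin n → ℝ) :=
  toLex (α ∘ σ)

lemma lexKey_injective (σ : Equiv.Perm (Fin n)) : Function.Injective (lexKey σ) :=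
  toLex.injective.comp σ.surjective.injective_comp_right

lemma lexGT_iff_lexKey_lt {σ : Equiv.Perm (Fin n)} {α β : Fin n → ℝ} :
    lexGT σ β α ↔ lexKey σ α < lexKey σ β :=
  exists_congr fun _ => and_congr_left' (forall₂_congr fun _ _ => eq_comm)

variable {S : Set (Fin n → ℝ)} (σ : Equiv.Perm (Fin n))

lemma pairwiseDisjoint_piece : (outerCorners S).PairwiseDisjoint (piece S σ) := by
  intro α hα β hβ hne
  rw [Function.onFun, Set.disjoint_left]
  rintro x ⟨-, hxα, hα'⟩ ⟨-, hxβ, hβ'⟩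
  rcases ((lexKey_injective σ).ne hne).lt_or_gt with h | h
  · exact hα' β hβ (lexGT_iff_lexKey_lt.2 h) hxβ
  · exact hβ' α hα (lexGT_iff_lexKey_lt.2 h) hxα

lemma biUnion_piece (hC : (outerCorners S).Finite)
    (hcov : ∀ x ∈ S, ∃ α ∈ outerCorners S, x ≤ α) :
    ⋃ α ∈ outerCorners S, piece S σ α = S := by
  refine subset_antisymm (Set.iUnion₂_subset fun _ _ x hx => hx.1) fun x hx => ?_
  obtain ⟨α, ⟨hα, hxα⟩, hmax⟩ := (hC.subset (Set.sep_subset _ (x ≤ ·))).exists_maximalFor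
    (lexKey σ) _ (hcov x hx)
  refine Set.mem_biUnion hα ⟨hx, hxα, fun β hβ hβα hxβ => ?_⟩
  have hlt := lexGT_iff_lexKey_lt.1 hβα
  exact hlt.not_ge (hmax ⟨hβ, hxβ⟩ hlt.le)

lemma measurableSet_piece (hS : MeasurableSet S) (hC : (outerCorners S).Finite)
    (α : Fin n → ℝ) : MeasurableSet (piece S σ α) := by
  have hpiece : piece S σ α =
      S ∩ Set.Iic α ∩ ⋂ β ∈ {β ∈ outerCorners S | lexGT σ β α}, (Set.Iic β)ᶜ := by
    ext x
    simp only [piece, Set.mem_ofPred_eq, Set.mem_inter_iff, Set.mem_Iic, Set.mem_iInter,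
      Set.mem_compl_iff, and_imp]
    tauto
  rw [hpiece]
  exact (hS.inter measurableSet_Iic).inter <| MeasurableSet.biInter
    (hC.subset (Set.sep_subset _ _)).countable fun β _ => measurableSet_Iic.compl

theorem tsum_measure_piece (μ : Measure (Fin n → ℝ)) (hS : MeasurableSet S)
    (hC : (outerCorners S).Finite) (hcov : ∀ x ∈ S, ∃ α ∈ outerCorners S, x ≤ α) :
    ∑' α : outerCorners S, μ (piece S σ α) = μ S := by
  rw [← measure_biUnion hC.countable (pairwiseDisjoint_piece σ)
    (fun α _ => measurableSet_piece σ hS hC α), biUnion_piece σ hC hcov]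

end Pieces

section Boxes

variable {n : ℕ}

def box (b : Fin n → ℕ) : Set (Fin n → ℝ) :=
  Set.univ.pi fun i => Set.Ioc (b i : ℝ) (b i + 1)

def boxTop (b : Fin n → ℕ) : Fin n → ℝ :=
  fun i => b i + 1

lemma boxTop_mem_box (b : Fin n → ℕ) : boxTop b ∈ box b :=
  fun _ _ => ⟨lt_add_one _, le_rfl⟩

lemma le_boxTop_of_mem_box {b : Fin n → ℕ} {x : Fin n → ℝ} (hx : x ∈ box b) : x ≤ boxTop b :=
  fun i => (hx i trivial).2

lemma mem_Ioc_natCast_iff {x : ℝ} {k : ℕ} :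
    x ∈ Set.Ioc (k : ℝ) (k + 1) ↔ 0 < x ∧ ⌈x⌉₊ - 1 = k := by
  have hceil := Nat.ceil_eq_iff (a := x) k.succ_ne_zero
  push_cast at hceil
  constructor
  · rintro ⟨hkx, hxk⟩
    exact ⟨(Nat.cast_nonneg k).trans_lt hkx, by rw [hceil.2 ⟨hkx, hxk⟩, Nat.succ_sub_one]⟩
  · rintro ⟨hx, hk⟩
    have := Nat.ceil_pos.2 hx
    exact hceil.1 (by omega)

lemma mem_box_iff {b : Fin n → ℕ} {x : Fin n → ℝ} :
    x ∈ box b ↔ (∀ i, 0 < x i) ∧ (fun i => ⌈x i⌉₊ - 1) = b := by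
  simp only [box, Set.mem_univ_pi, mem_Ioc_natCast_iff, forall_and, funext_iff]

lemma pairwise_disjoint_box : Pairwise (Function.onFun Disjoint (box (n := n))) :=
  fun _ _ hbc => Set.disjoint_left.2 fun _ hb hc =>
    hbc ((mem_box_iff.1 hb).2.symm.trans (mem_box_iff.1 hc).2)

lemma measurableSet_box (b : Fin n → ℕ) : MeasurableSet (box b) :=
  MeasurableSet.univ_pi fun _ => measurableSet_Ioc

lemma volume_box (b : Fin n → ℕ) : volume (box b) = 1 := by
  simp [box, volume_pi_pi]

lemma volume_biUnion_box (T : Set (Fin n → ℕ)) : volume (⋃ b ∈ T, box b) = T.encard := by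
  rw [measure_biUnion T.to_countable (pairwise_disjoint_box.set_pairwise T)
    fun b _ => measurableSet_box b]
  simp only [volume_box, ENNReal.tsum_set_one]

theorem tsum_volume_piece_biUnion_box {T : Set (Fin n → ℕ)} (hT : T.Finite)
    (σ : Equiv.Perm (Fin n)) :
    ∑' α : outerCorners (⋃ b ∈ T, box b), volume (piece (⋃ b ∈ T, box b) σ α) = T.encard := by
  have hPS : boxTop '' T ⊆ ⋃ b ∈ T, box b := by
    rintro _ ⟨b, hb, rfl⟩
    exact Set.mem_biUnion hb (boxTop_mem_box b)
  have hcof : ∀ x ∈ ⋃ b ∈ T, box b, ∃ p ∈ boxTop '' T, x ≤ p := by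
    simp only [Set.mem_iUnion, exists_prop, Set.mem_image, exists_exists_and_eq_and]
    exact fun x ⟨b, hb, hx⟩ => ⟨b, hb, le_boxTop_of_mem_box hx⟩
  rw [tsum_measure_piece σ volume (MeasurableSet.biUnion T.to_countable fun b _ =>
      measurableSet_box b) ((hT.image boxTop).subset (outerCorners_subset_of_cofinal hPS hcof))
      fun x => exists_mem_outerCorners_ge_of_cofinal (hT.image boxTop) hPS hcof,
    volume_biUnion_box]

end Boxes

section StandardMonomials

variable {n : ℕ} {M : Ideal (MvPolynomial (Fin n) ℂ)}

def standardExponents (M : Ideal (MvPolynomial (Fin n) ℂ)) : Set (Fin n → ℕ) :=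
  {b | monomial (Finsupp.equivFunOnFinite.symm b) (1 : ℂ) ∉ M}

lemma staircaseI_eq_biUnion_box (M : Ideal (MvPolynomial (Fin n) ℂ)) :
    staircaseI M = ⋃ b ∈ standardExponents M, box b := by
  ext x
  simp only [staircaseI, standardExponents, Set.mem_ofPred_eq, Set.mem_iUnion, mem_box_iff,
    exists_prop]
  constructor
  · rintro ⟨hpos, hx⟩
    exact ⟨_, hx, hpos, rfl⟩
  · rintro ⟨b, hb, hpos, rfl⟩
    exact ⟨hpos, hb⟩

lemma IsMonomialIdeal.coeff_eq_zero_of_mem (hM : IsMonomialIdeal M)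
    {p : MvPolynomial (Fin n) ℂ} (hp : p ∈ M) {m : Fin n →₀ ℕ} (hm : monomial m (1 : ℂ) ∉ M) :
    p.coeff m = 0 := by
  obtain ⟨B, rfl⟩ := hM
  rw [monIdeal, ← Set.image_image (fun s => monomial s (1 : ℂ)), mem_ideal_span_monomial_image]
    at hp hm
  by_contra h
  refine hm fun m' hm' => ?_
  rw [Finset.mem_singleton.1 (support_monomial_subset hm')]
  exact hp m (mem_support_iff.2 h)

lemma linearIndependent_mk_standardMonomial (hM : IsMonomialIdeal M) :
    LinearIndependent ℂ fun b : standardExponents M =>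
      Ideal.Quotient.mkₐ ℂ M (monomial (Finsupp.equivFunOnFinite.symm b.1) 1) := by
  rw [linearIndependent_iff']
  intro s g hg b hb
  set p := ∑ i ∈ s, g i • monomial (Finsupp.equivFunOnFinite.symm i.1) (1 : ℂ)
  have hp : p ∈ M := by
    rw [← Ideal.Quotient.eq_zero_iff_mem, ← Ideal.Quotient.mkₐ_eq_mk ℂ, map_sum]
    simpa only [map_smul] using hg
  have hcoeff := hM.coeff_eq_zero_of_mem hp b.2
  simpa [p, coeff_sum, coeff_monomial, Subtype.coe_inj, hb] using hcoeff

lemma span_mk_standardMonomial (M : Ideal (MvPolynomial (Fin n) ℂ)) :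
    ⊤ ≤ Submodule.span ℂ (Set.range fun b : standardExponents M =>
      Ideal.Quotient.mkₐ ℂ M (monomial (Finsupp.equivFunOnFinite.symm b.1) 1)) := by
  rintro x -
  obtain ⟨p, rfl⟩ := Ideal.Quotient.mkₐ_surjective ℂ M x
  rw [p.as_sum, map_sum]
  refine Submodule.sum_mem _ fun m _ => ?_
  rw [← mul_one (p.coeff m), ← smul_eq_mul, ← smul_monomial, map_smul]
  refine Submodule.smul_mem _ _ ?_
  by_cases hm : monomial m (1 : ℂ) ∈ M
  · rw [Ideal.Quotient.mkₐ_eq_mk, Ideal.Quotient.eq_zero_iff_mem.2 hm]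
    exact Submodule.zero_mem _
  · exact Submodule.subset_span ⟨⟨m, by simpa [standardExponents] using hm⟩, by simp⟩

lemma standardExponents_finite (hM : IsMonomialIdeal M)
    [FiniteDimensional ℂ (MvPolynomial (Fin n) ℂ ⧸ M)] : (standardExponents M).Finite :=
  have := (linearIndependent_mk_standardMonomial hM).finite
  Set.toFinite _

lemma finrank_quotient_eq_ncard (hM : IsMonomialIdeal M)
    [FiniteDimensional ℂ (MvPolynomial (Fin n) ℂ ⧸ M)] :
    Module.finrank ℂ (MvPolynomial (Fin n) ℂ ⧸ M) = (standardExponents M).ncard := by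
  rw [Module.finrank_eq_nat_card_basis (Module.Basis.mk (linearIndependent_mk_standardMonomial hM)
    (span_mk_standardMonomial M)), Nat.card_coe_set_eq]

end StandardMonomials

/-- for an Artinian monomial ideal `M` and any permutation `σ`, the
sum over the outer corners `α` of the staircase of the volumes of the partition
pieces `S_{σ,α}` equals `dim_ℂ ℂ[z]/M`. -/
theorem stmt14 {n : ℕ} (M : Ideal (MvPolynomial (Fin n) ℂ))
    (hmon : IsMonomialIdeal M)
    (hart : FiniteDimensional ℂ (MvPolynomial (Fin n) ℂ ⧸ M))
    (σ : Equiv.Perm (Fin n)) :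
    ∑' α : outerCorners (staircaseI M),
        volume (piece (staircaseI M) σ (α : Fin n → ℝ)) =
      (Module.finrank ℂ (MvPolynomial (Fin n) ℂ ⧸ M) : ENNReal) := by
  have hT := standardExponents_finite hmon
  rw [staircaseI_eq_biUnion_box, tsum_volume_piece_biUnion_box hT σ,
    finrank_quotient_eq_ncard hmon, ← hT.cast_ncard_eq, ENat.toENNReal_coe]
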